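/- Let Δ, k, l be natural numbers, K ∈ {0,1}, c ∈ ℤ, and z ∈ ℂ with z ≠ 0, and assume Δ < K + k < Δ + l. Work in the field F((q)) of formal Laurent series in q over the field F = ℂ(X, Y) of rational functions in two variables, and for n ∈ ℤ set gₙ = q^{n(K+k−Δ)} · Y^{n(K−1−c)} · Xᵏ · (qⁿX − z)^{−l}, the inverse taken in this field. Then for every n ∈ ℤ the q-adic order of gₙ is at least |n|; consequently the family (gₙ)_{n∈ℤ} is summable in the q-adic topology and the sum ∑_{n∈ℤ} gₙ involves no negative powers of q. In particular, if l ≥ 2 then the choices (K,k) = (0, Δ+1) and (K,k) = (1, Δ) always satisfy the hypothesis. -/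

import Mathlib

open scoped Classical

set_option maxSynthPendingDepth 2

/-- The field `F = ℂ(X,Y)` of rational functions in two variables, realized as `ℂ(X)(Y)`. -/
abbrev FXY : Type := RatFunc (RatFunc ℂ)

/-- The variable `q` of the field `F((q))` of formal Laurent series over `F = ℂ(X,Y)`. -/
noncomputable def qvar : LaurentSeries FXY :=
  HahnSeries.single (1 : ℤ) (1 : FXY)

/-- The variable `X` of `ℂ(X,Y)`, viewed as a constant Laurent series in `q`. -/
noncomputable def Xvar : LaurentSeries FXY :=
  HahnSeries.C (RatFunc.C (RatFunc.X : RatFunc ℂ))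

/-- The variable `Y` of `ℂ(X,Y)`, viewed as a constant Laurent series in `q`. -/
noncomputable def Yvar : LaurentSeries FXY :=
  HahnSeries.C (RatFunc.X : FXY)

/-- A constant `z ∈ ℂ`, viewed as an element of `F((q))`. -/
noncomputable def zconst (z : ℂ) : LaurentSeries FXY :=
  HahnSeries.C (RatFunc.C (RatFunc.C z))

/-- The family `gₙ = q^{n(K+k−Δ)}·Y^{n(K−1−c)}·Xᵏ·(qⁿX − z)^{−l}` in the field `F((q))`. -/
noncomputable def gfam (Δ k l K : ℕ) (c : ℤ) (z : ℂ) (n : ℤ) : LaurentSeries FXY :=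
  qvar ^ (n * ((K : ℤ) + (k : ℤ) - (Δ : ℤ))) * Yvar ^ (n * ((K : ℤ) - 1 - c)) *
    Xvar ^ k * (qvar ^ n * Xvar - zconst z) ^ (-(l : ℤ))

/-! Since `1 ≤ K + k - Δ ≤ l - 1`, the exponent `n (K + k - Δ) - l min(n, 0)` of the leading
power of `q` in `gₙ` is at least `|n|`: the factor `(qⁿX - z)^{-l}` has order `-l n` for `n < 0`
(leading term `qⁿX`) and order `0` for `n ≥ 0` (leading term `-z`, or `X - z` when `n = 0`).
A family of Laurent series whose orders grow like `|n|` is summable, with sum in `F[[q]]`. -/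

namespace HahnSeries

section Field

variable {Γ R : Type*} [AddCommGroup Γ] [LinearOrder Γ] [IsOrderedAddMonoid Γ] [Field R]

theorem order_inv (x : R⟦Γ⟧) : x⁻¹.order = -x.order := by
  obtain rfl | hx := eq_or_ne x 0
  · simp
  · have h := order_mul hx (inv_ne_zero hx)
    rw [mul_inv_cancel₀ hx, order_one] at h
    exact eq_neg_of_add_eq_zero_right h.symm

theorem order_zpow (x : R⟦Γ⟧) : ∀ m : ℤ, (x ^ m).order = m • x.order
  | (m : ℕ) => by rw [zpow_natCast, order_pow, natCast_zsmul]
  | .negSucc m => by rw [zpow_negSucc, order_inv, order_pow, negSucc_zsmul]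

end Field

theorem orderTop_single_sub_single {Γ R : Type*} [LinearOrder Γ] [AddGroup R] {a b : Γ}
    {r s : R} (hab : a ≠ b) (hr : r ≠ 0) (hs : s ≠ 0) :
    (single a r - single b s).orderTop = ↑(min a b) := by
  rcases hab.lt_or_gt with h | h
  · rw [orderTop_sub (by simpa [orderTop_single hr, orderTop_single hs] using h),
      orderTop_single hr, min_eq_left h.le]
  · rw [← neg_sub, orderTop_neg,
      orderTop_sub (by simpa [orderTop_single hr, orderTop_single hs] using h),
      orderTop_single hs, min_eq_right h.le]

namespace SummableFamily

variable {R : Type*} [AddCommMonoid R] (f : ℤ → LaurentSeries R)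

theorem abs_le_of_coeff_ne_zero (hf : ∀ n, |n| ≤ (f n).order) {n d : ℤ}
    (h : (f n).coeff d ≠ 0) : |n| ≤ d :=
  (hf n).trans (order_le_of_coeff_ne_zero h)

theorem finite_setOf_coeff_ne_zero_of_abs_le_order (hf : ∀ n, |n| ≤ (f n).order) (d : ℤ) :
    {n | (f n).coeff d ≠ 0}.Finite :=
  (Set.finite_Icc (-d) d).subset fun _ hn => abs_le.mp (abs_le_of_coeff_ne_zero f hf hn)

def ofAbsLeOrder (hf : ∀ n, |n| ≤ (f n).order) : SummableFamily ℤ R ℤ where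
  toFun := f
  isPWO_iUnion_support' := by
    refine BddBelow.isWF ⟨0, fun d hd => ?_⟩ |>.isPWO
    obtain ⟨n, hn⟩ := Set.mem_iUnion.mp hd
    exact (abs_nonneg n).trans (abs_le_of_coeff_ne_zero f hf hn)
  finite_co_support' := finite_setOf_coeff_ne_zero_of_abs_le_order f hf

theorem coeff_hsum_ofAbsLeOrder_of_neg (hf : ∀ n, |n| ≤ (f n).order) {d : ℤ} (hd : d < 0) :
    (ofAbsLeOrder f hf).hsum.coeff d = 0 := by
  by_contra h
  obtain ⟨n, hn⟩ := Set.mem_iUnion.mp (support_hsum_subset h)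
  exact hd.not_ge ((abs_nonneg n).trans (abs_le_of_coeff_ne_zero f hf hn))

end SummableFamily

end HahnSeries

theorem abs_le_mul_sub_mul_min_zero {e l : ℤ} (he : 1 ≤ e) (hel : e ≤ l - 1) (n : ℤ) :
    |n| ≤ n * e - l * min n 0 := by
  rcases le_or_gt 0 n with hn | hn
  · rw [min_eq_right hn, abs_of_nonneg hn]
    nlinarith
  · rw [min_eq_left hn.le, abs_of_neg hn]
    nlinarith

open HahnSeries

theorem RatFunc.C_X_ne_C_C (z : ℂ) :
    (RatFunc.C (RatFunc.X : RatFunc ℂ) : FXY) ≠ RatFunc.C (RatFunc.C z) := by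
  rw [Ne, (RatFunc.C : RatFunc ℂ →+* FXY).injective.eq_iff, ← RatFunc.algebraMap_X,
    ← RatFunc.algebraMap_C, (RatFunc.algebraMap_injective ℂ).eq_iff]
  exact Polynomial.X_ne_C z

theorem qvar_zpow_mul_Xvar_sub_zconst (z : ℂ) (n : ℤ) :
    qvar ^ n * Xvar - zconst z =
      single n (RatFunc.C RatFunc.X : FXY) - single 0 (RatFunc.C (RatFunc.C z) : FXY) := by
  rw [qvar, ← RatFunc.single_zpow, Xvar, zconst, C_apply, C_apply, single_mul_single, add_zero,
    one_mul]

theorem orderTop_qvar_zpow_mul_Xvar_sub_zconst {z : ℂ} (hz : z ≠ 0) (n : ℤ) :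
    (qvar ^ n * Xvar - zconst z).orderTop = ↑(min n 0) := by
  rw [qvar_zpow_mul_Xvar_sub_zconst]
  obtain rfl | hn := eq_or_ne n 0
  · rw [← single_sub, orderTop_single (sub_ne_zero.mpr (RatFunc.C_X_ne_C_C z)), min_self]
  · exact orderTop_single_sub_single hn (by simp [RatFunc.X_ne_zero]) (by simp [hz])

theorem order_gfam {z : ℂ} (hz : z ≠ 0) (Δ k l K : ℕ) (c : ℤ) (n : ℤ) :
    (gfam Δ k l K c z n).order = n * ((K : ℤ) + k - Δ) - l * min n 0 := by
  have hw := orderTop_qvar_zpow_mul_Xvar_sub_zconst hz n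
  have hw0 : qvar ^ n * Xvar - zconst z ≠ 0 := orderTop_ne_top.mp (hw ▸ WithTop.coe_ne_top)
  have hwo : (qvar ^ n * Xvar - zconst z).order = min n 0 :=
    WithTop.coe_injective ((order_eq_orderTop_of_ne_zero hw0).trans hw)
  -- the `zpow` in `gfam` comes from the `DivInvMonoid` instance of Hahn series, not from the
  -- field structure, so `zpow_ne_zero` only applies with `G₀` given explicitly
  have zpow_ne {x : LaurentSeries FXY} (hx : x ≠ 0) (m : ℤ) : x ^ m ≠ 0 :=
    zpow_ne_zero (G₀ := LaurentSeries FXY) m hx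
  have hq : qvar ^ (n * ((K : ℤ) + k - Δ)) ≠ 0 := zpow_ne (single_ne_zero one_ne_zero) _
  have hY : Yvar ^ (n * ((K : ℤ) - 1 - c)) ≠ 0 := zpow_ne (by simp [Yvar, RatFunc.X_ne_zero]) _
  have hX : Xvar ^ k ≠ 0 := pow_ne_zero _ (by simp [Xvar, RatFunc.X_ne_zero])
  rw [gfam, order_mul (mul_ne_zero (mul_ne_zero hq hY) hX) (zpow_ne hw0 _),
    order_mul (mul_ne_zero hq hY) hX, order_mul hq hY, order_zpow, order_zpow, order_zpow,
    hwo, order_pow, qvar, order_single one_ne_zero, Yvar, Xvar, order_C, order_C,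
    smul_eq_mul, smul_eq_mul, smul_eq_mul, smul_zero]
  ring

theorem cuspidal_expansion_super_general (Δ k l K : ℕ) (c : ℤ)
    (z : ℂ) (hz : z ≠ 0) (h1 : Δ < K + k) (h2 : K + k < Δ + l) :
    (∀ n : ℤ, |n| ≤ (gfam Δ k l K c z n).order) ∧
    (∀ d : ℤ, {n : ℤ | (gfam Δ k l K c z n).coeff d ≠ 0}.Finite) ∧
    (∃ F : HahnSeries.SummableFamily ℤ FXY ℤ,
      (∀ n : ℤ, F n = gfam Δ k l K c z n) ∧ ∀ d : ℤ, d < 0 → F.hsum.coeff d = 0) ∧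
    (2 ≤ l → (Δ < 0 + (Δ + 1) ∧ 0 + (Δ + 1) < Δ + l) ∧ (Δ < 1 + Δ ∧ 1 + Δ < Δ + l)) := by
  have hg (n : ℤ) : |n| ≤ (gfam Δ k l K c z n).order := by
    rw [order_gfam hz]
    exact abs_le_mul_sub_mul_min_zero (by omega) (by omega) n
  exact ⟨hg, SummableFamily.finite_setOf_coeff_ne_zero_of_abs_le_order _ hg,
    ⟨SummableFamily.ofAbsLeOrder _ hg, fun _ => rfl,
      fun _ => SummableFamily.coeff_hsum_ofAbsLeOrder_of_neg _ hg⟩, by omega⟩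

/-- Let `Δ, k, l ∈ ℕ`, `K ∈ {0,1}`, `c ∈ ℤ`, `z ≠ 0`, and assume `Δ < K + k < Δ + l`.
Then each `gₙ` has `q`-adic order at least `|n|`; consequently the family `(gₙ)` is
summable in the `q`-adic topology and its sum has no negative powers of `q`. In particular
if `l ≥ 2` then `(K,k) = (0, Δ+1)` and `(K,k) = (1, Δ)` always satisfy the hypothesis. -/
theorem cuspidal_expansion_super (Δ k l K : ℕ) (hK : K = 0 ∨ K = 1) (c : ℤ)
    (z : ℂ) (hz : z ≠ 0) (h1 : Δ < K + k) (h2 : K + k < Δ + l) :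
    (∀ n : ℤ, |n| ≤ (gfam Δ k l K c z n).order) ∧
    (∀ d : ℤ, {n : ℤ | (gfam Δ k l K c z n).coeff d ≠ 0}.Finite) ∧
    (∃ F : HahnSeries.SummableFamily ℤ FXY ℤ,
      (∀ n : ℤ, F n = gfam Δ k l K c z n) ∧ ∀ d : ℤ, d < 0 → F.hsum.coeff d = 0) ∧
    (2 ≤ l → (Δ < 0 + (Δ + 1) ∧ 0 + (Δ + 1) < Δ + l) ∧ (Δ < 1 + Δ ∧ 1 + Δ < Δ + l)) :=
  cuspidal_expansion_super_general Δ k l K c z hz h1 h2
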